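/- (Coefficientwise form of the identity from the proof of Theorem 1.3 of the paper.) Let 0 ≤ k ≤ n−1, let 0 ≤ t_1 < … < t_{k+1} ≤ n−1 be integers, and let I' be any (n−k)-element subset of {1,…,n}. Let f_1 < … < f_{n−k} be the increasing enumeration of {0,1,…,n} ∖ {t_1,…,t_{k+1}}, and for each 1 ≤ i ≤ k+1 let g^{(i)}_1 < … < g^{(i)}_{n−k} be the increasing enumeration of {0,1,…,n−1} ∖ {t_1,…,t̂_i,…,t_{k+1}} (t_i omitted from the removed set). Then the identity L_n · [f_1,…,f_{n−k}]_{I'} = Σ_{i=1}^{k+1} (−1)^{k+1−i} · [g^{(i)}_1,…,g^{(i)}_{n−k}]_{I'} · L_{n,t_i} holds in R = 𝔽_p[y_1,…,y_n]. -/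

import Mathlib

/-- The bracket `[e_1,…,e_m]_I`: the determinant `det (y_{ι a} ^ (p ^ e b))` in
`𝔽_p[y_1,…,y_n]`, where `ι : Fin m → Fin n` enumerates the subset `I`. -/
noncomputable def bracket (p n m : ℕ) (e : Fin m → ℕ) (ι : Fin m → Fin n) :
    MvPolynomial (Fin n) (ZMod p) :=
  Matrix.det (Matrix.of fun a b : Fin m =>
    (MvPolynomial.X (ι a) : MvPolynomial (Fin n) (ZMod p)) ^ p ^ e b)

/-- `Lpoly p n s = L_{n,s} = [0,1,…,ŝ,…,n]` (for `s < n`); `Lpoly p n n = L_n = [0,…,n-1]`. -/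
noncomputable def Lpoly (p n s : ℕ) : MvPolynomial (Fin n) (ZMod p) :=
  bracket p n n (fun j => if (j : ℕ) < s then (j : ℕ) else (j : ℕ) + 1) id

/-!
For any vectors `v_0, …, v_n` in `Rⁿ`, expanding along a repeated row the determinant of the
`(n+1) × (n+1)` matrix with columns `v_s` (and one coordinate row doubled) gives the relation
`∑_s (-1)^s L_{n,s} v_s = 0`, where `L_{n,s}` is the maximal minor omitting `v_s`; here
`v_s = (y_a^{p^s})_a`. Replacing the last column of the matrix of `[f]_{I'}` (the column of
exponent `f_{n-k} = n`) by a vector `w` gives a linear form in `w`, which turns this relation into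
`∑_s (-1)^s L_{n,s} [f_1, …, f_{n-k-1}, s]_{I'} = 0`. The term `s = n` is `± L_n [f]_{I'}`; a term
with `s ∉ {t_i}` has a repeated exponent and vanishes; and for `s = t_i`, sorting the exponents
into `g^{(i)}` moves the last column to the position `q` of `t_i` in `g^{(i)}`, where `q + i = t_i`
(counting from `0`) because exactly `i` of the `t_j` lie below `t_i`.
-/

open MvPolynomial Matrix Finset

namespace Matrix

variable {R : Type*} [CommRing R]

theorem det_updateCol_sum_smul {m ι : Type*} [Fintype m] [DecidableEq m] (M : Matrix m m R)
    (j : m) (s : Finset ι) (c : ι → R) (w : ι → m → R) :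
    det (updateCol M j (∑ i ∈ s, c i • w i)) = ∑ i ∈ s, c i * det (updateCol M j (w i)) := by
  classical
  induction s using Finset.induction_on with
  | empty =>
    simpa using det_updateCol_smul M j 0 0
  | insert i s hi ih =>
    rw [sum_insert hi, sum_insert hi, det_updateCol_add, det_updateCol_smul, ih]

theorem sum_neg_one_pow_mul_det_succAbove_smul {n : ℕ} (v : Fin (n + 1) → Fin n → R) :
    ∑ s : Fin (n + 1), ((-1) ^ (s : ℕ) * det (of fun a b => v (s.succAbove b) a)) • v s = 0 := by
  funext a
  let M : Matrix (Fin (n + 1)) (Fin (n + 1)) R := of (Fin.cons (fun s => v s a) fun a' s => v s a')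
  have hM : M.det = 0 := det_zero_of_row_eq (Fin.succ_ne_zero a).symm rfl
  have hminor : ∀ s : Fin (n + 1),
      M.submatrix Fin.succ s.succAbove = of fun a b => v (s.succAbove b) a := fun _ => rfl
  have hrow : ∀ s, M 0 s = v s a := fun _ => rfl
  rw [det_succ_row_zero] at hM
  simpa only [hminor, hrow, Finset.sum_apply, Pi.zero_apply, Pi.smul_apply, smul_eq_mul,
    mul_right_comm _ (v _ a)] using hM

theorem neg_one_pow_mul_det_eq_of_succAbove {m : ℕ} (A B : Matrix (Fin (m + 1)) (Fin (m + 1)) R)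
    (i j : Fin (m + 1)) (hcol : ∀ a, A a i = B a j)
    (hrest : ∀ a c, A a (i.succAbove c) = B a (j.succAbove c)) :
    (-1) ^ (i : ℕ) * det A = (-1) ^ (j : ℕ) * det B := by
  have hsub : ∀ a : Fin (m + 1),
      A.submatrix a.succAbove i.succAbove = B.submatrix a.succAbove j.succAbove :=
    fun a => ext fun _ c => hrest _ c
  have hsign : ∀ a x : ℕ, (-1 : R) ^ x * (-1) ^ (a + x) = (-1) ^ a := fun a x => by
    rw [pow_add, mul_left_comm, ← mul_pow, neg_one_mul, neg_neg, one_pow, mul_one]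
  rw [det_succ_column A i, det_succ_column B j, mul_sum, mul_sum]
  refine sum_congr rfl fun a _ => ?_
  simp only [← mul_assoc, hsign, hcol, hsub]

end Matrix

theorem Finset.image_comp_succAbove {α : Type*} [DecidableEq α] {m : ℕ} {g : Fin (m + 1) → α}
    (hg : Function.Injective g) (q : Fin (m + 1)) :
    univ.image (g ∘ q.succAbove) = (univ.image g).erase (g q) := by
  rw [← image_image, Fin.image_succAbove_univ, compl_singleton, image_erase hg]

theorem StrictMono.card_filter_lt_apply {α : Type*} [LinearOrder α] {m : ℕ} {g : Fin m → α}
    (hg : StrictMono g) (q : Fin m) : #{y ∈ univ.image g | y < g q} = q := by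
  rw [filter_image, card_image_of_injective _ hg.injective, ← Fin.card_Iio]
  congr 1
  ext b
  simp [hg.lt_iff_lt]

theorem StrictMono.eq_of_image_univ_eq {α : Type*} [Preorder α] [DecidableEq α] {m : ℕ}
    {f g : Fin m → α} (hf : StrictMono f) (hg : StrictMono g)
    (h : univ.image f = univ.image g) : f = g := by
  rw [← hf.range_inj hg, ← Set.image_univ, ← Set.image_univ, ← coe_univ, ← coe_image,
    ← coe_image, h]

section Enumeration

variable {n k m : ℕ} {t : Fin (k + 1) → ℕ} {f : Fin (m + 1) → ℕ}

theorem apply_last_eq_of_image_eq_range_sdiff (hf : StrictMono f) (htn : ∀ i, t i < n)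
    (hfim : univ.image f = range (n + 1) \ univ.image t) : f (Fin.last m) = n := by
  obtain ⟨b, -, hb⟩ := mem_image.mp (show n ∈ univ.image f by simp [hfim, fun i => (htn i).ne])
  have hle := mem_range.mp (mem_sdiff.mp (hfim ▸ mem_image_of_mem f (mem_univ (Fin.last m)))).1
  have := hf.monotone (Fin.le_last b)
  omega

theorem image_castSucc_eq_range_sdiff (hf : StrictMono f) (htn : ∀ i, t i < n)
    (hfim : univ.image f = range (n + 1) \ univ.image t) :
    univ.image (f ∘ Fin.castSucc) = range n \ univ.image t := by
  rw [← Fin.succAbove_last, image_comp_succAbove hf.injective, hfim,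
    apply_last_eq_of_image_eq_range_sdiff hf htn hfim]
  ext y
  simp only [mem_erase, mem_sdiff, mem_range]
  grind

theorem exists_succAbove_eq_castSucc (ht : StrictMono t) (htn : ∀ i, t i < n) (hf : StrictMono f)
    (hfim : univ.image f = range (n + 1) \ univ.image t) {g : Fin (m + 1) → ℕ} (hg : StrictMono g)
    (i : Fin (k + 1))
    (hgim : univ.image g = range n \ univ.image (fun j : Fin k => t (i.succAbove j))) :
    ∃ q : Fin (m + 1), g q = t i ∧ g ∘ q.succAbove = f ∘ Fin.castSucc ∧ (q : ℕ) + i = t i := by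
  have hti : univ.image (t ∘ i.succAbove) = (univ.image t).erase (t i) :=
    image_comp_succAbove ht.injective i
  rw [show (fun j : Fin k => t (i.succAbove j)) = t ∘ i.succAbove from rfl, hti] at hgim
  obtain ⟨q, -, hq⟩ := mem_image.mp (show t i ∈ univ.image g by simp [hgim, htn i])
  refine ⟨q, hq, hg.comp (Fin.strictMono_succAbove q) |>.eq_of_image_univ_eq
    (hf.comp Fin.strictMono_castSucc) ?_, ?_⟩
  · rw [image_comp_succAbove hg.injective, image_castSucc_eq_range_sdiff hf htn hfim, hgim, hq]
    ext y
    have := mem_image_of_mem t (mem_univ i)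
    simp only [mem_erase, mem_sdiff]
    grind
  · have hq_card := hg.card_filter_lt_apply q
    have hi_card := ht.card_filter_lt_apply i
    have hsplit := card_filter_add_card_filter_not (s := range (t i)) (· ∈ univ.image t)
    have hbelow : {y ∈ univ.image g | y < g q} = {y ∈ range (t i) | y ∉ univ.image t} := by
      have := htn i
      ext y
      simp only [hq, hgim, mem_filter, mem_sdiff, mem_erase, mem_range]
      grind
    have habove : {y ∈ range (t i) | y ∈ univ.image t} = {y ∈ univ.image t | y < t i} := by
      ext y
      simp only [mem_filter, mem_range]
      tauto
    rw [card_range, habove, hi_card, ← hbelow, hq_card] at hsplit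
    omega

end Enumeration

theorem Fin.val_succAbove_eq_ite {n : ℕ} (s : Fin (n + 1)) (j : Fin n) :
    (s.succAbove j : ℕ) = if (j : ℕ) < s then (j : ℕ) else (j : ℕ) + 1 := by
  unfold Fin.succAbove
  split_ifs with h <;> simp_all [Fin.lt_def, Fin.val_succ]

theorem Lpoly_eq_det_succAbove (p : ℕ) {n : ℕ} (s : Fin (n + 1)) :
    Lpoly p n s =
      det (of fun a b => (X a : MvPolynomial (Fin n) (ZMod p)) ^ p ^ (s.succAbove b : ℕ)) := by
  simp only [Lpoly, bracket, Fin.val_succAbove_eq_ite, id]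

theorem sum_range_neg_one_pow_mul_Lpoly_smul (p n : ℕ) :
    ∑ s ∈ range (n + 1), ((-1) ^ s * Lpoly p n s) •
      (fun a : Fin n => (X a : MvPolynomial (Fin n) (ZMod p)) ^ p ^ s) = 0 := by
  rw [← Fin.sum_univ_eq_sum_range]
  simpa only [Lpoly_eq_det_succAbove] using sum_neg_one_pow_mul_det_succAbove_smul fun s a =>
    (X a : MvPolynomial (Fin n) (ZMod p)) ^ p ^ (s : ℕ)

theorem sum_range_neg_one_pow_mul_Lpoly_mul_bracket_update (p n : ℕ) {m : ℕ} (e : Fin m → ℕ)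
    (ι : Fin m → Fin n) (j : Fin m) :
    ∑ s ∈ range (n + 1), (-1) ^ s * Lpoly p n s * bracket p n m (Function.update e j s) ι = 0 := by
  have hupdate : ∀ s, bracket p n m (Function.update e j s) ι =
      det (updateCol (of fun a b => (X (ι a) : MvPolynomial (Fin n) (ZMod p)) ^ p ^ e b) j
        fun a => X (ι a) ^ p ^ s) := by
    intro s
    unfold bracket
    congr 1
    ext a b
    rcases eq_or_ne b j with rfl | hb <;> simp [*]
  have hcol : ∑ s ∈ range (n + 1), ((-1) ^ s * Lpoly p n s) •
      (fun a => (X (ι a) : MvPolynomial (Fin n) (ZMod p)) ^ p ^ s) = 0 := by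
    funext a
    simpa using congrFun (sum_range_neg_one_pow_mul_Lpoly_smul p n) (ι a)
  simp only [hupdate]
  rw [← det_updateCol_sum_smul, hcol]
  exact det_eq_zero_of_column_eq_zero j fun a => updateCol_self

theorem bracket_eq_zero_of_apply_eq {p n m : ℕ} {e : Fin m → ℕ} (ι : Fin m → Fin n) {i j : Fin m}
    (hij : i ≠ j) (h : e i = e j) : bracket p n m e ι = 0 :=
  det_zero_of_column_eq hij fun _ => by simp [h]

theorem neg_one_pow_mul_bracket_eq_of_succAbove {p n m : ℕ} (ι : Fin (m + 1) → Fin n)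
    {e e' : Fin (m + 1) → ℕ} {i j : Fin (m + 1)} (hij : e i = e' j)
    (hrest : ∀ c, e (i.succAbove c) = e' (j.succAbove c)) :
    (-1) ^ (i : ℕ) * bracket p n (m + 1) e ι = (-1) ^ (j : ℕ) * bracket p n (m + 1) e' ι :=
  neg_one_pow_mul_det_eq_of_succAbove _ _ i j (fun _ => by simp [hij])
    fun _ c => by simp [hrest c]

theorem bracket_update_last_eq_zero (p : ℕ) {n k m : ℕ} (ι : Fin (m + 1) → Fin n)
    {t : Fin (k + 1) → ℕ} (htn : ∀ i, t i < n) {f : Fin (m + 1) → ℕ} (hf : StrictMono f)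
    (hfim : univ.image f = range (n + 1) \ univ.image t) {s : ℕ} (hs : s < n)
    (hst : s ∉ univ.image t) : bracket p n (m + 1) (Function.update f (Fin.last m) s) ι = 0 := by
  have hs_img : s ∈ univ.image (f ∘ Fin.castSucc) := by
    rw [image_castSucc_eq_range_sdiff hf htn hfim, mem_sdiff, mem_range]
    exact ⟨hs, hst⟩
  obtain ⟨b, -, hb⟩ := mem_image.mp hs_img
  have hne := (Fin.castSucc_lt_last b).ne
  exact bracket_eq_zero_of_apply_eq ι hne (by simpa [hne] using hb)

theorem neg_one_pow_mul_bracket_update_last (p : ℕ) {n k m : ℕ} (hm : m + 1 + k = n)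
    (ι : Fin (m + 1) → Fin n) {t : Fin (k + 1) → ℕ} (ht : StrictMono t) (htn : ∀ i, t i < n)
    {f : Fin (m + 1) → ℕ} (hf : StrictMono f) (hfim : univ.image f = range (n + 1) \ univ.image t)
    {g : Fin (m + 1) → ℕ} (hg : StrictMono g) (i : Fin (k + 1))
    (hgim : univ.image g = range n \ univ.image fun j : Fin k => t (i.succAbove j)) :
    (-1) ^ t i * bracket p n (m + 1) (Function.update f (Fin.last m) (t i)) ι =
      -((-1) ^ n * (-1) ^ (k - (i : ℕ)) * bracket p n (m + 1) g ι) := by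
  obtain ⟨q, hq, hsucc, hqi⟩ := exists_succAbove_eq_castSucc ht htn hf hfim hg i hgim
  have hsign := neg_one_pow_mul_bracket_eq_of_succAbove (p := p) ι
    (e := Function.update f (Fin.last m) (t i)) (e' := g) (i := Fin.last m) (j := q)
    (by simp [hq]) fun c => by simpa [(Fin.castSucc_lt_last c).ne] using (congrFun hsucc c).symm
  rw [Fin.val_last] at hsign
  have hsq : (-1 : MvPolynomial (Fin n) (ZMod p)) ^ m * (-1) ^ m = 1 :=
    pow_mul_pow_eq_one m (by norm_num)
  have hparity : (-1 : MvPolynomial (Fin n) (ZMod p)) ^ (t i + m + q) =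
      (-1) ^ (n + (k - (i : ℕ)) + 1) :=
    neg_one_pow_congr (by simp only [Nat.even_iff]; omega)
  rw [pow_succ, pow_add, pow_add, pow_add] at hparity
  linear_combination ((-1) ^ t i * (-1) ^ m) * hsign + bracket p n (m + 1) g ι * hparity
    - ((-1) ^ t i * bracket p n (m + 1) (Function.update f (Fin.last m) (t i)) ι) * hsq

theorem Lpoly_mul_bracket_eq_sum (p : ℕ) {n k m : ℕ} (hm : m + k = n) (ι : Fin m → Fin n)
    {t : Fin (k + 1) → ℕ} (ht : StrictMono t) (htn : ∀ i, t i < n)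
    {f : Fin m → ℕ} (hf : StrictMono f) (hfim : univ.image f = range (n + 1) \ univ.image t)
    {g : Fin (k + 1) → Fin m → ℕ} (hg : ∀ i, StrictMono (g i))
    (hgim : ∀ i, univ.image (g i) = range n \ univ.image fun j : Fin k => t (i.succAbove j)) :
    Lpoly p n n * bracket p n m f ι =
      ∑ i : Fin (k + 1), (-1) ^ (k - (i : ℕ)) * bracket p n m (g i) ι * Lpoly p n (t i) := by
  obtain ⟨b, -, -⟩ := mem_image.mp (show n ∈ univ.image f by simp [hfim, fun i => (htn i).ne])
  obtain ⟨m, rfl⟩ := Nat.exists_eq_add_one_of_ne_zero b.pos.ne'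
  have hlast := apply_last_eq_of_image_eq_range_sdiff hf htn hfim
  have hsum := sum_range_neg_one_pow_mul_Lpoly_mul_bracket_update p n f ι (Fin.last m)
  have hsupp : insert n (univ.image t) ⊆ range (n + 1) := by
    intro s hs
    simp only [mem_insert, mem_image, mem_univ, true_and] at hs
    rcases hs with rfl | ⟨i, rfl⟩
    · exact self_mem_range_succ s
    · exact mem_range.mpr ((htn i).trans n.lt_succ_self)
  have hvanish : ∀ s ∈ range (n + 1), s ∉ insert n (univ.image t) →
      (-1) ^ s * Lpoly p n s * bracket p n (m + 1) (Function.update f (Fin.last m) s) ι = 0 := by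
    intro s hs hnot
    rw [mem_insert, not_or] at hnot
    rw [bracket_update_last_eq_zero p ι htn hf hfim
      (lt_of_le_of_ne (mem_range_succ_iff.mp hs) hnot.1) hnot.2, mul_zero]
  have hterm : ∀ i, (-1) ^ t i * Lpoly p n (t i) *
      bracket p n (m + 1) (Function.update f (Fin.last m) (t i)) ι =
      -((-1) ^ n * ((-1) ^ (k - (i : ℕ)) * bracket p n (m + 1) (g i) ι * Lpoly p n (t i))) :=
    fun i => by
      linear_combination Lpoly p n (t i) *
        neg_one_pow_mul_bracket_update_last p hm ι ht htn hf hfim (hg i) i (hgim i)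
  have hsq : (-1 : MvPolynomial (Fin n) (ZMod p)) ^ n * (-1) ^ n = 1 :=
    pow_mul_pow_eq_one n (by norm_num)
  have hn_notin : n ∉ univ.image t := by
    simpa only [mem_image, mem_univ, true_and, not_exists] using fun i => (htn i).ne
  rw [← sum_subset hsupp hvanish, sum_insert hn_notin, sum_image fun i _ j _ h => ht.injective h,
    sum_congr rfl fun i _ => hterm i, sum_neg_distrib, ← mul_sum,
    Function.update_eq_self_iff.mpr hlast.symm] at hsum
  linear_combination (-1) ^ n * hsum - (Lpoly p n n * bracket p n (m + 1) f ι -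
    ∑ i : Fin (k + 1), (-1) ^ (k - (i : ℕ)) * bracket p n (m + 1) (g i) ι * Lpoly p n (t i)) * hsq

theorem statement5_general (p n k : ℕ) (hn : 1 ≤ n)
    (hk : k ≤ n - 1) (t : Fin (k + 1) → ℕ) (ht : StrictMono t)
    (htn : ∀ i, t i ≤ n - 1)
    (I' : Finset (Fin n)) (hI' : I'.card = n - k)
    (f : Fin (n - k) → ℕ) (hf : StrictMono f)
    (hfim : Finset.image f Finset.univ =
      Finset.range (n + 1) \ Finset.image t Finset.univ)
    (g : Fin (k + 1) → Fin (n - k) → ℕ) (hg : ∀ i, StrictMono (g i))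
    (hgim : ∀ i : Fin (k + 1), Finset.image (g i) Finset.univ =
      Finset.range n \ Finset.image (fun j : Fin k => t (i.succAbove j)) Finset.univ) :
    Lpoly p n n *
        bracket p n (n - k) f (fun b => ((I'.orderIsoOfFin hI') b : Fin n)) =
      ∑ i : Fin (k + 1),
        (-1 : MvPolynomial (Fin n) (ZMod p)) ^ (k - (i : ℕ)) *
          bracket p n (n - k) (g i) (fun b => ((I'.orderIsoOfFin hI') b : Fin n)) *
          Lpoly p n (t i) := by
  have htn' : ∀ i, t i < n := fun i => by have := htn i; omega
  exact Lpoly_mul_bracket_eq_sum p (by omega) _ ht htn' hf hfim hg hgim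

/-- Coefficientwise form of the identity from the proof of Theorem 1.3.
For `0 ≤ k ≤ n−1`, `0 ≤ t_1 < … < t_{k+1} ≤ n−1`, and any `(n−k)`-element subset `I'`
of `{1,…,n}`, with `f` the increasing enumeration of `{0,…,n} ∖ {t_1,…,t_{k+1}}` and
`g^{(i)}` the increasing enumeration of `{0,…,n−1} ∖ {t_1,…,t̂_i,…,t_{k+1}}`:
`L_n · [f_1,…,f_{n−k}]_{I'} = Σ_{i=1}^{k+1} (−1)^{k+1−i} · [g^{(i)}_1,…,g^{(i)}_{n−k}]_{I'} · L_{n,t_i}`. -/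
theorem statement5 (p n k : ℕ) (hp : p.Prime) (hodd : Odd p) (hn : 1 ≤ n)
    (hk : k ≤ n - 1) (t : Fin (k + 1) → ℕ) (ht : StrictMono t)
    (htn : ∀ i, t i ≤ n - 1)
    (I' : Finset (Fin n)) (hI' : I'.card = n - k)
    (f : Fin (n - k) → ℕ) (hf : StrictMono f)
    (hfim : Finset.image f Finset.univ =
      Finset.range (n + 1) \ Finset.image t Finset.univ)
    (g : Fin (k + 1) → Fin (n - k) → ℕ) (hg : ∀ i, StrictMono (g i))
    (hgim : ∀ i : Fin (k + 1), Finset.image (g i) Finset.univ =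
      Finset.range n \ Finset.image (fun j : Fin k => t (i.succAbove j)) Finset.univ) :
    Lpoly p n n *
        bracket p n (n - k) f (fun b => ((I'.orderIsoOfFin hI') b : Fin n)) =
      ∑ i : Fin (k + 1),
        (-1 : MvPolynomial (Fin n) (ZMod p)) ^ (k - (i : ℕ)) *
          bracket p n (n - k) (g i) (fun b => ((I'.orderIsoOfFin hI') b : Fin n)) *
          Lpoly p n (t i) :=
  statement5_general p n k hn hk t ht htn I' hI' f hf hfim g hg hgim
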